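/- arXiv:2402.09492 — 2 statements merged into one kernel-verified Lean document; each statement's English description precedes it below -/
import Mathlib

section
/- Let g₁, …, g_m be vectors in ℝⁿ and let g* be the point of minimum Euclidean norm in conv{g₁, …, g_m}. Then the pair (v, α) = (−g*, −‖g*‖²) is an optimal solution of the problem: minimize α + ½‖v‖² over (v, α) ∈ ℝⁿ × ℝ subject to ⟨g_i, v⟩ ≤ α for all i = 1, …, m; that is, (−g*, −‖g*‖²) is feasible and every feasible (v, α) satisfies α + ½‖v‖² ≥ −½‖g*‖². -/
open RealInnerProductSpace

/-- If `g*` is the minimum-norm point of `conv{g₁,…,g_m}`, then `(v, α) = (−g*, −‖g*‖²)`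
is an optimal solution of the MGDA subproblem: it is feasible
(`⟪g_i, −g*⟫ ≤ −‖g*‖²` for all `i`), and every feasible `(v, α)` satisfies
`α + ½‖v‖² ≥ −½‖g*‖²`. -/
theorem mgda_subproblem_optimal_solution
    {n m : ℕ} (g : Fin m → EuclideanSpace ℝ (Fin n))
    (gstar : EuclideanSpace ℝ (Fin n))
    (hmem : gstar ∈ convexHull ℝ (Set.range g))
    (hmin : ∀ y ∈ convexHull ℝ (Set.range g), ‖gstar‖ ≤ ‖y‖) :
    (∀ i, ⟪g i, -gstar⟫ ≤ -‖gstar‖ ^ 2) ∧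
    ∀ (v : EuclideanSpace ℝ (Fin n)) (α : ℝ), (∀ i, ⟪g i, v⟫ ≤ α) →
      -(1 / 2) * ‖gstar‖ ^ 2 ≤ α + (1 / 2) * ‖v‖ ^ 2 := by
  have hconv : Convex ℝ (convexHull ℝ (Set.range g)) := convex_convexHull ℝ _
  -- variational inequality: ∀ y in hull, ‖gstar‖² ≤ ⟪gstar, y⟫
  have key : ∀ y ∈ convexHull ℝ (Set.range g), ‖gstar‖ ^ 2 ≤ ⟪gstar, y⟫ := by
    intro y hy
    set p : ℝ := ⟪gstar, y - gstar⟫ with hp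
    set q : ℝ := ‖y - gstar‖ ^ 2 with hq
    have hstep : ∀ t : ℝ, 0 < t → t ≤ 1 → 0 ≤ 2 * p + t * q := by
      intro t ht0 ht1
      have hmemt : gstar + t • (y - gstar) ∈ convexHull ℝ (Set.range g) := by
        have := hconv hmem hy (a := 1 - t) (b := t) (by linarith) ht0.le (by ring)
        convert this using 1
        module
      have h1 : ‖gstar‖ ≤ ‖gstar + t • (y - gstar)‖ := hmin _ hmemt
      have h2 : ‖gstar‖ ^ 2 ≤ ‖gstar + t • (y - gstar)‖ ^ 2 := by
        have := norm_nonneg gstar; nlinarith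
      have hexp : ‖gstar + t • (y - gstar)‖ ^ 2
          = ‖gstar‖ ^ 2 + 2 * t * p + t ^ 2 * q := by
        rw [@norm_add_sq_real, real_inner_smul_right, norm_smul, Real.norm_eq_abs,
          abs_of_pos ht0, hq, hp]
        ring
      rw [hexp] at h2
      nlinarith
    have hpnn : 0 ≤ p := by
      by_contra hneg
      push_neg at hneg
      have hq0 : 0 ≤ q := sq_nonneg _
      rcases eq_or_lt_of_le hq0 with hq0' | hq0'
      · have := hstep 1 one_pos le_rfl
        nlinarith
      · set t : ℝ := min 1 (-p / q) with htdef
        have ht0 : 0 < t := lt_min one_pos (div_pos (by linarith) hq0')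
        have ht1 : t ≤ 1 := min_le_left _ _
        have htq : t * q ≤ -p := by
          have : t ≤ -p / q := min_le_right _ _
          calc t * q ≤ (-p / q) * q := by nlinarith
            _ = -p := by field_simp
        have := hstep t ht0 ht1
        nlinarith
    have : p = ⟪gstar, y⟫ - ‖gstar‖ ^ 2 := by
      rw [hp, inner_sub_right, real_inner_self_eq_norm_sq]
    linarith [this ▸ hpnn]
  constructor
  · intro i
    have := key (g i) (subset_convexHull ℝ _ ⟨i, rfl⟩)
    rw [inner_neg_right, real_inner_comm]
    linarith
  · intro v α hfeas
    have hαv : ⟪gstar, v⟫ ≤ α := by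
      have hhalf : convexHull ℝ (Set.range g) ⊆ {y | ⟪y, v⟫ ≤ α} := by
        apply convexHull_min
        · rintro _ ⟨i, rfl⟩; exact hfeas i
        · exact convex_halfSpace_le
            ⟨fun a b => inner_add_left a b v, fun c a => real_inner_smul_left a v c⟩ α
      exact hhalf hmem
    have hcs : -(‖gstar‖ * ‖v‖) ≤ ⟪gstar, v⟫ :=
      neg_le_of_abs_le (abs_real_inner_le_norm gstar v)
    nlinarith [sq_nonneg (‖v‖ - ‖gstar‖)]
end

section
/- Let g₁, …, g_m and g_h be vectors in ℝⁿ, let C = { Σ_{i=1}^m μ_i g_i + ν g_h : μ_i ≥ 0, Σ μ_i = 1, ν ∈ ℝ }, and let g* be the element of minimum Euclidean norm in C. Then the pair (v, α) = (−g*, −‖g*‖²) is an optimal solution of the prediction problem: minimize α + ½‖v‖² over (v, α) ∈ ℝⁿ × ℝ subject to ⟨g_i, v⟩ ≤ α for all i = 1, …, m and ⟨g_h, v⟩ = 0; that is, (−g*, −‖g*‖²) is feasible and every feasible (v, α) satisfies α + ½‖v‖² ≥ −½‖g*‖². -/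
open RealInnerProductSpace Finset

/-- If `g*` is the minimum-norm element of
`C = {∑ μ_i g_i + ν g_h : μ ∈ Δ^{m−1}, ν ∈ ℝ}`, then `(v, α) = (−g*, −‖g*‖²)` is an
optimal solution of the PMGDA prediction problem: it is feasible
(`⟪g_i, −g*⟫ ≤ −‖g*‖²` for all `i` and `⟪g_h, −g*⟫ = 0`), and every feasible `(v, α)`
satisfies `α + ½‖v‖² ≥ −½‖g*‖²`. -/
theorem prediction_problem_optimal_solution
    {n m : ℕ} (g : Fin m → EuclideanSpace ℝ (Fin n))
    (gh gstar : EuclideanSpace ℝ (Fin n))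
    (hmem : gstar ∈ {x : EuclideanSpace ℝ (Fin n) | ∃ (μ : Fin m → ℝ) (ν : ℝ),
        (∀ i, 0 ≤ μ i) ∧ ∑ i, μ i = 1 ∧ x = ∑ i, μ i • g i + ν • gh})
    (hmin : ∀ y ∈ {x : EuclideanSpace ℝ (Fin n) | ∃ (μ : Fin m → ℝ) (ν : ℝ),
        (∀ i, 0 ≤ μ i) ∧ ∑ i, μ i = 1 ∧ x = ∑ i, μ i • g i + ν • gh}, ‖gstar‖ ≤ ‖y‖) :
    ((∀ i, ⟪g i, -gstar⟫ ≤ -‖gstar‖ ^ 2) ∧ ⟪gh, -gstar⟫ = 0) ∧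
    ∀ (v : EuclideanSpace ℝ (Fin n)) (α : ℝ),
      (∀ i, ⟪g i, v⟫ ≤ α) → ⟪gh, v⟫ = 0 →
      -(1 / 2) * ‖gstar‖ ^ 2 ≤ α + (1 / 2) * ‖v‖ ^ 2 := by
  obtain ⟨μ₀, ν₀, hμ₀, hμ₀s, hg⟩ := hmem
  -- variational inequality
  have key : ∀ y : EuclideanSpace ℝ (Fin n),
      (∃ (μ : Fin m → ℝ) (ν : ℝ), (∀ i, 0 ≤ μ i) ∧ ∑ i, μ i = 1 ∧
        y = ∑ i, μ i • g i + ν • gh) → ‖gstar‖ ^ 2 ≤ ⟪gstar, y⟫ := by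
    rintro y ⟨μ, ν, hμ, hμs, hy⟩
    have hq : ∀ t : ℝ, 0 ≤ t → t ≤ 1 →
        0 ≤ 2 * t * ⟪gstar, y - gstar⟫ + t ^ 2 * ‖y - gstar‖ ^ 2 := by
      intro t ht0 ht1
      have hz : gstar + t • (y - gstar) ∈ {x : EuclideanSpace ℝ (Fin n) |
          ∃ (μ : Fin m → ℝ) (ν : ℝ), (∀ i, 0 ≤ μ i) ∧ ∑ i, μ i = 1 ∧
          x = ∑ i, μ i • g i + ν • gh} := by
        refine ⟨fun i => (1 - t) * μ₀ i + t * μ i, (1 - t) * ν₀ + t * ν, ?_, ?_, ?_⟩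
        · intro i
          show 0 ≤ (1 - t) * μ₀ i + t * μ i
          have := hμ₀ i; have := hμ i; nlinarith
        · rw [Finset.sum_add_distrib, ← Finset.mul_sum, ← Finset.mul_sum, hμ₀s, hμs]; ring
        · have : (∑ i, ((1 - t) * μ₀ i + t * μ i) • g i : EuclideanSpace ℝ (Fin n))
              = (1 - t) • (∑ i, μ₀ i • g i) + t • (∑ i, μ i • g i) := by
            rw [Finset.smul_sum, Finset.smul_sum, ← Finset.sum_add_distrib]
            congr 1; ext i; rw [add_smul, mul_smul, mul_smul]
          rw [this, hg, hy]
          module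
      have h1 := hmin _ hz
      have h2 : ‖gstar‖ ^ 2 ≤ ‖gstar + t • (y - gstar)‖ ^ 2 :=
        pow_le_pow_left₀ (norm_nonneg _) h1 2
      rw [norm_add_sq_real, real_inner_smul_right, norm_smul] at h2
      rw [Real.norm_eq_abs, abs_of_nonneg ht0] at h2
      nlinarith
    have hc : 0 ≤ ⟪gstar, y - gstar⟫ := by
      by_contra hc
      push_neg at hc
      set c := ⟪gstar, y - gstar⟫ with hcdef
      have hd : (0:ℝ) ≤ ‖y - gstar‖ ^ 2 := sq_nonneg _
      rcases le_or_gt (‖y - gstar‖ ^ 2) (-c) with h | h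
      · have := hq 1 zero_le_one le_rfl
        nlinarith
      · have ht0 : (0:ℝ) < -c / ‖y - gstar‖ ^ 2 := by
          apply div_pos (by linarith) (by nlinarith)
        have ht1 : -c / ‖y - gstar‖ ^ 2 ≤ 1 := by
          rw [div_le_one (by nlinarith)]; linarith
        have hdpos : (0:ℝ) < ‖y - gstar‖ ^ 2 := by nlinarith
        have hthis := hq _ ht0.le ht1
        have heq : 2 * (-c / ‖y - gstar‖ ^ 2) * c + (-c / ‖y - gstar‖ ^ 2) ^ 2 * ‖y - gstar‖ ^ 2
            = -(c ^ 2) / ‖y - gstar‖ ^ 2 := by field_simp; ring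
        rw [heq, le_div_iff₀ hdpos] at hthis
        nlinarith
    have : ⟪gstar, y - gstar⟫ = ⟪gstar, y⟫ - ‖gstar‖ ^ 2 := by
      rw [inner_sub_right, real_inner_self_eq_norm_sq]
    linarith
  -- ⟪gh, gstar⟫ = 0
  have hgh : ⟪gstar, gh⟫ = 0 := by
    have hp := key (gstar + (1:ℝ) • gh) ⟨μ₀, ν₀ + 1, hμ₀, hμ₀s, by rw [hg]; module⟩
    have hn := key (gstar + (-1:ℝ) • gh) ⟨μ₀, ν₀ - 1, hμ₀, hμ₀s, by rw [hg]; module⟩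
    rw [inner_add_right, real_inner_smul_right, real_inner_self_eq_norm_sq] at hp hn
    linarith
  have hgi : ∀ i, ‖gstar‖ ^ 2 ≤ ⟪gstar, g i⟫ := by
    intro i
    have hy : (g i + ν₀ • gh : EuclideanSpace ℝ (Fin n))
        = ∑ j, (if j = i then (1:ℝ) else 0) • g j + ν₀ • gh := by
      congr 1
      symm
      simp [ite_smul]
    have := key (g i + ν₀ • gh) ⟨fun j => if j = i then 1 else 0, ν₀,
      fun j => by positivity, by simp, hy⟩
    rw [inner_add_right, real_inner_smul_right, hgh] at this
    linarith
  refine ⟨⟨fun i => ?_, ?_⟩, ?_⟩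
  · rw [inner_neg_right, real_inner_comm]
    linarith [hgi i]
  · rw [inner_neg_right, real_inner_comm, hgh, neg_zero]
  · intro v α hα hv
    have hsv : ⟪gstar, v⟫ ≤ α := by
      have : ⟪gstar, v⟫ = ∑ i, μ₀ i * ⟪g i, v⟫ := by
        rw [hg, inner_add_left, sum_inner, real_inner_smul_left, hv, mul_zero, add_zero]
        exact Finset.sum_congr rfl fun i _ => real_inner_smul_left _ _ _
      rw [this]
      calc ∑ i, μ₀ i * ⟪g i, v⟫ ≤ ∑ i, μ₀ i * α :=
            Finset.sum_le_sum fun i _ => mul_le_mul_of_nonneg_left (hα i) (hμ₀ i)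
        _ = α := by rw [← Finset.sum_mul, hμ₀s, one_mul]
    have h0 : (0:ℝ) ≤ ‖v + gstar‖ ^ 2 := sq_nonneg _
    rw [norm_add_sq_real] at h0
    nlinarith [real_inner_comm v gstar]
end
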